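/- Let k be an algebraically closed field and let σ₁, σ₂ ∈ k[t] be nonconstant tamely ramified polynomials of degrees d₁ > d₂. If ω = f·(dt)^ν is a semi-invariant form of weight ν ≥ 1 for (σ₁, σ₂), then its conductor C (the number of a ∈ k with ord_a f ≠ 0) satisfies C ≤ 2 + 3(d₂ − 1)/(d₁ − d₂), i.e. C·(d₁ − d₂) ≤ 2(d₁ − d₂) + 3(d₂ − 1). -/

import Mathlib

open Polynomial

/-- Substitution of a polynomial `σ` into a rational function `h`:
if `h = p/q` then `h ∘ σ = (p ∘ σ)/(q ∘ σ)`. -/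
noncomputable def ratComp {k : Type*} [Field k] (h : RatFunc k) (σ : k[X]) : RatFunc k :=
  algebraMap k[X] (RatFunc k) (h.num.comp σ) / algebraMap k[X] (RatFunc k) (h.denom.comp σ)

/-- The order of a rational function `f` at a point `a` of the affine line. -/
noncomputable def ordAt {k : Type*} [Field k] (f : RatFunc k) (a : k) : ℤ :=
  (f.num.rootMultiplicity a : ℤ) - (f.denom.rootMultiplicity a : ℤ)

/-- `f·(dt)^ν` is a semi-invariant form of weight `ν` for the correspondence `(σ₁, σ₂)`
of the affine line: `f ≠ 0` and `σ₁*ω = λ·σ₂*ω` for some constant `λ ≠ 0`, i.e.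
`(f∘σ₁)·(σ₁')^ν = λ·(f∘σ₂)·(σ₂')^ν`. -/
def SemiInvariant {k : Type*} [Field k] (σ₁ σ₂ : k[X]) (f : RatFunc k) (ν : ℤ) : Prop :=
  f ≠ 0 ∧ ∃ lam : k, lam ≠ 0 ∧
    ratComp f σ₁ * (algebraMap k[X] (RatFunc k) (derivative σ₁)) ^ ν
      = RatFunc.C lam *
        (ratComp f σ₂ * (algebraMap k[X] (RatFunc k) (derivative σ₂)) ^ ν)

/-- A nonconstant polynomial `σ` is tamely ramified if `char k` does not divide its degree
and every root of `σ - c`, for every `c`, has multiplicity prime to `char k`. -/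
def TamelyRamified {k : Type*} [Field k] (σ : k[X]) : Prop :=
  ¬ (ringChar k ∣ σ.natDegree) ∧
    ∀ c a : k, (σ - C c).IsRoot a → ¬ (ringChar k ∣ (σ - C c).rootMultiplicity a)

/-!
Taking orders at a point `a` on both sides of `(f ∘ σ₁)·(σ₁')^ν = λ·(f ∘ σ₂)·(σ₂')^ν` gives
`e₁(a)·ord_{σ₁(a)} f + ν·ord_a σ₁' = e₂(a)·ord_{σ₂(a)} f + ν·ord_a σ₂'`, where `eᵢ(a)` is the
ramification index of `σᵢ` at `a`. So if neither derivative vanishes at `a`, then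
`ord_{σ₁(a)} f = ord_{σ₂(a)} f`. Let `S` be the set of zeros and poles of `f`: the points of
`σ₁⁻¹(S)` where `σ₁` is unramified therefore lie in `σ₂⁻¹(S) ∪ {σ₂' = 0}`, which has at most
`|S|·d₂ + d₂ − 1` elements. On the other hand, tameness gives `ord_a σ₁' = e₁(a) − 1`, so the
total ramification of `σ₁` is at most `d₁ − 1`; since each fibre has `d₁` points counted with
multiplicity, `σ₁⁻¹(S)` has at least `|S|·d₁ − 2(d₁ − 1)` unramified points. Comparing the two
counts gives the bound.
-/

open scoped Finset

lemma Finset.sum_le_card_filter_eq_one_add_two_mul_sum_sub_one {ι : Type*} (F : Finset ι)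
    {e : ι → ℕ} (he : ∀ a ∈ F, 1 ≤ e a) :
    ∑ a ∈ F, e a ≤ #{a ∈ F | e a = 1} + 2 * ∑ a ∈ F, (e a - 1) := by
  rw [Finset.card_filter, Finset.mul_sum, ← Finset.sum_add_distrib]
  refine Finset.sum_le_sum fun a ha => ?_
  have := he a ha
  split_ifs <;> omega

namespace Polynomial

variable {k : Type*} [Field k] {σ : k[X]}

lemma sub_C_ne_zero_of_natDegree_pos (hσ : 0 < σ.natDegree) (c : k) : σ - C c ≠ 0 := by
  intro h
  have := natDegree_sub_C (p := σ) (a := c)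
  rw [h, natDegree_zero] at this
  omega

lemma comp_ne_zero_of_natDegree_pos {p : k[X]} (hp : p ≠ 0) (hσ : 0 < σ.natDegree) :
    p.comp σ ≠ 0 := by
  rw [Ne, comp_eq_zero_iff, not_or, not_and]
  exact ⟨hp, fun _ hC => by rw [hC, natDegree_C] at hσ; exact hσ.false⟩

lemma derivative_ne_zero_of_not_ringChar_dvd (h : ¬ ringChar k ∣ σ.natDegree) :
    derivative σ ≠ 0 := by
  have hd : 0 < σ.natDegree := Nat.pos_of_ne_zero fun h0 => h (h0 ▸ dvd_zero _)
  have hσ : σ ≠ 0 := by rintro rfl; exact hd.ne' natDegree_zero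
  intro h0
  have hcoeff := congrArg (coeff · (σ.natDegree - 1)) h0
  simp only [coeff_derivative, coeff_zero] at hcoeff
  rw [← Nat.cast_succ, Nat.succ_eq_add_one, Nat.sub_add_cancel hd] at hcoeff
  exact h ((ringChar.spec k _).mp
    ((mul_eq_zero.mp hcoeff).resolve_left (leadingCoeff_ne_zero.mpr hσ)))

noncomputable def ramificationIndexAt (σ : k[X]) (a : k) : ℕ :=
  (σ - C (σ.eval a)).rootMultiplicity a

lemma one_le_ramificationIndexAt (hσ : 0 < σ.natDegree) (a : k) :
    1 ≤ ramificationIndexAt σ a :=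
  (rootMultiplicity_pos (sub_C_ne_zero_of_natDegree_pos hσ _)).mpr (by simp)

lemma ramificationIndexAt_eq_one_iff (hσ : 0 < σ.natDegree) (a : k) :
    ramificationIndexAt σ a = 1 ↔ ¬ (derivative σ).IsRoot a := by
  have h := one_lt_rootMultiplicity_iff_isRoot (t := a)
    (sub_C_ne_zero_of_natDegree_pos hσ (σ.eval a))
  have h1 := one_le_ramificationIndexAt hσ a
  simp only [derivative_sub, derivative_C, sub_zero, IsRoot.def, eval_sub, eval_C, sub_self,
    true_and] at h
  rw [ramificationIndexAt, IsRoot.def, ← h]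
  unfold ramificationIndexAt at h1
  omega

lemma rootMultiplicity_derivative_add_one (hσ : 0 < σ.natDegree) (ht : TamelyRamified σ)
    (a : k) :
    (derivative σ).rootMultiplicity a + 1 = ramificationIndexAt σ a := by
  have hroot : (σ - C (σ.eval a)).IsRoot a := by simp
  have hmult : ((ramificationIndexAt σ a : ℕ) : k) ∈ nonZeroDivisors k :=
    mem_nonZeroDivisors_of_ne_zero fun h => ht.2 _ _ hroot ((ringChar.spec k _).mp h)
  have := derivative_rootMultiplicity_of_root_of_mem_nonZeroDivisors hroot hmult
  rw [derivative_sub, derivative_C, sub_zero] at this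
  have := one_le_ramificationIndexAt hσ a
  unfold ramificationIndexAt at *
  omega

lemma rootMultiplicity_comp {p : k[X]} (hp : p ≠ 0) (hσ : 0 < σ.natDegree) (a : k) :
    (p.comp σ).rootMultiplicity a
      = p.rootMultiplicity (σ.eval a) * ramificationIndexAt σ a := by
  classical
  obtain ⟨u, hu, hndvd⟩ := p.exists_eq_pow_rootMultiplicity_mul_and_not_dvd hp (σ.eval a)
  have hu0 : u ≠ 0 := by rintro rfl; exact hndvd (dvd_zero _)
  have hcomp : p.comp σ = (σ - C (σ.eval a)) ^ p.rootMultiplicity (σ.eval a) * u.comp σ := by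
    conv_lhs => rw [hu]
    simp [mul_comp, pow_comp, sub_comp]
  have hu_root : ¬ (u.comp σ).IsRoot a := by
    rw [IsRoot.def, eval_comp, ← IsRoot.def, ← dvd_iff_isRoot]
    exact hndvd
  rw [hcomp, rootMultiplicity_mul (mul_ne_zero (pow_ne_zero _
      (sub_C_ne_zero_of_natDegree_pos hσ _)) (comp_ne_zero_of_natDegree_pos hu0 hσ)),
    rootMultiplicity_eq_zero hu_root, add_zero, ← count_roots, roots_pow, Multiset.count_nsmul,
    count_roots, ramificationIndexAt]

section Fibers

variable [DecidableEq k]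

noncomputable def fiber (σ : k[X]) (s : k) : Finset k := (σ - C s).roots.toFinset

lemma mem_fiber (hσ : 0 < σ.natDegree) {s a : k} : a ∈ fiber σ s ↔ σ.eval a = s := by
  rw [fiber, Multiset.mem_toFinset, mem_roots (sub_C_ne_zero_of_natDegree_pos hσ s), IsRoot.def,
    eval_sub, eval_C, sub_eq_zero]

lemma pairwiseDisjoint_fiber (hσ : 0 < σ.natDegree) (S : Set k) : S.PairwiseDisjoint (fiber σ) :=
  fun _ _ _ _ hst => Finset.disjoint_left.mpr fun _ has hat =>
    hst (((mem_fiber hσ).mp has).symm.trans ((mem_fiber hσ).mp hat))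

lemma card_biUnion_fiber_le (σ : k[X]) (S : Finset k) :
    (S.biUnion (fiber σ)).card ≤ S.card * σ.natDegree := by
  refine Finset.card_biUnion_le.trans (Finset.sum_le_card_nsmul _ _ _ fun s _ => ?_)
  exact (Multiset.toFinset_card_le _).trans ((card_roots' _).trans natDegree_sub_C.le)

lemma sum_fiber_ramificationIndexAt [IsAlgClosed k] (hσ : 0 < σ.natDegree) (s : k) :
    ∑ a ∈ fiber σ s, ramificationIndexAt σ a = σ.natDegree := by
  rw [← natDegree_sub_C (a := s), ← splits_iff_card_roots.mp (IsAlgClosed.splits _),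
    ← Multiset.toFinset_sum_count_eq]
  refine Finset.sum_congr rfl fun a ha => ?_
  rw [count_roots, ramificationIndexAt, (mem_fiber hσ).mp ha]

end Fibers

lemma sum_ramificationIndexAt_sub_one_le (hσ : 0 < σ.natDegree) (ht : TamelyRamified σ)
    (T : Finset k) : ∑ a ∈ T, (ramificationIndexAt σ a - 1) ≤ σ.natDegree - 1 := by
  classical
  calc ∑ a ∈ T, (ramificationIndexAt σ a - 1)
      = ∑ a ∈ T, (derivative σ).roots.count a := by
        refine Finset.sum_congr rfl fun a _ => ?_
        rw [count_roots, ← rootMultiplicity_derivative_add_one hσ ht, Nat.add_sub_cancel]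
    _ ≤ ∑ a ∈ T ∪ (derivative σ).roots.toFinset, (derivative σ).roots.count a :=
        Finset.sum_le_sum_of_subset Finset.subset_union_left
    _ = Multiset.card (derivative σ).roots :=
        Multiset.sum_count_eq_card fun a ha =>
          Finset.mem_union_right _ (Multiset.mem_toFinset.mpr ha)
    _ ≤ σ.natDegree - 1 := (card_roots' _).trans (natDegree_derivative_le σ)

lemma card_mul_natDegree_le [DecidableEq k] [IsAlgClosed k] (hσ : 0 < σ.natDegree)
    (ht : TamelyRamified σ) (S : Finset k) :
    S.card * σ.natDegree
      ≤ #{a ∈ S.biUnion (fiber σ) | ramificationIndexAt σ a = 1} + 2 * (σ.natDegree - 1) :=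
  calc S.card * σ.natDegree = ∑ s ∈ S, ∑ a ∈ fiber σ s, ramificationIndexAt σ a := by
        simp [sum_fiber_ramificationIndexAt hσ]
    _ = ∑ a ∈ S.biUnion (fiber σ), ramificationIndexAt σ a :=
        (Finset.sum_biUnion (pairwiseDisjoint_fiber hσ _)).symm
    _ ≤ _ := Finset.sum_le_card_filter_eq_one_add_two_mul_sum_sub_one _
          fun a _ => one_le_ramificationIndexAt hσ a
    _ ≤ _ := by grw [sum_ramificationIndexAt_sub_one_le hσ ht]

end Polynomial

section OrdAt

variable {k : Type*} [Field k]

lemma ordAt_div_algebraMap {p q : k[X]} (hp : p ≠ 0) (hq : q ≠ 0) (a : k) :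
    ordAt (algebraMap k[X] (RatFunc k) p / algebraMap k[X] (RatFunc k) q) a
      = p.rootMultiplicity a - q.rootMultiplicity a := by
  set f := algebraMap k[X] (RatFunc k) p / algebraMap k[X] (RatFunc k) q
  have hf : f ≠ 0 := div_ne_zero (RatFunc.algebraMap_ne_zero hp) (RatFunc.algebraMap_ne_zero hq)
  have hcross : f.num * q = p * f.denom := (RatFunc.num_mul_eq_mul_denom_iff hq).mpr rfl
  have := congrArg (rootMultiplicity a) hcross
  rw [rootMultiplicity_mul (mul_ne_zero (RatFunc.num_ne_zero hf) hq),
    rootMultiplicity_mul (mul_ne_zero hp f.denom_ne_zero)] at this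
  rw [ordAt]
  omega

lemma ordAt_algebraMap {p : k[X]} (hp : p ≠ 0) (a : k) :
    ordAt (algebraMap k[X] (RatFunc k) p) a = p.rootMultiplicity a := by
  have := ordAt_div_algebraMap hp one_ne_zero a
  rwa [map_one, div_one, ← C_1, rootMultiplicity_C, Nat.cast_zero, sub_zero] at this

lemma ordAt_C (c a : k) : ordAt (RatFunc.C c) a = 0 := by
  rcases eq_or_ne c 0 with rfl | hc
  · simp [ordAt]
  · rw [← RatFunc.algebraMap_C, ordAt_algebraMap (C_ne_zero.mpr hc), rootMultiplicity_C,
      Nat.cast_zero]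

lemma ordAt_mul {f g : RatFunc k} (hf : f ≠ 0) (hg : g ≠ 0) (a : k) :
    ordAt (f * g) a = ordAt f a + ordAt g a := by
  have hfg : f * g = algebraMap k[X] (RatFunc k) (f.num * g.num)
      / algebraMap k[X] (RatFunc k) (f.denom * g.denom) := by
    conv_lhs => rw [← RatFunc.num_div_denom f, ← RatFunc.num_div_denom g]
    rw [map_mul, map_mul, div_mul_div_comm]
  have hnf := RatFunc.num_ne_zero hf
  have hng := RatFunc.num_ne_zero hg
  rw [hfg, ordAt_div_algebraMap (mul_ne_zero hnf hng)
      (mul_ne_zero f.denom_ne_zero g.denom_ne_zero), rootMultiplicity_mul (mul_ne_zero hnf hng),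
    rootMultiplicity_mul (mul_ne_zero f.denom_ne_zero g.denom_ne_zero), ordAt, ordAt]
  push_cast
  ring

lemma ordAt_inv {f : RatFunc k} (hf : f ≠ 0) (a : k) : ordAt f⁻¹ a = -ordAt f a := by
  conv_lhs => rw [← RatFunc.num_div_denom f, inv_div]
  rw [ordAt_div_algebraMap f.denom_ne_zero (RatFunc.num_ne_zero hf), ordAt]
  ring

lemma ordAt_zpow {f : RatFunc k} (hf : f ≠ 0) (n : ℤ) (a : k) :
    ordAt (f ^ n) a = n * ordAt f a := by
  induction n using Int.induction_on with
  | zero => simpa using ordAt_C 1 a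
  | succ n ih =>
    rw [zpow_add_one₀ hf, ordAt_mul (zpow_ne_zero _ hf) hf, ih]
    ring
  | pred n ih =>
    rw [zpow_sub_one₀ hf, ordAt_mul (zpow_ne_zero _ hf) (inv_ne_zero hf), ih, ordAt_inv hf]
    ring

lemma ratComp_ne_zero {f : RatFunc k} (hf : f ≠ 0) {σ : k[X]} (hσ : 0 < σ.natDegree) :
    ratComp f σ ≠ 0 :=
  div_ne_zero
    (RatFunc.algebraMap_ne_zero (comp_ne_zero_of_natDegree_pos (RatFunc.num_ne_zero hf) hσ))
    (RatFunc.algebraMap_ne_zero (comp_ne_zero_of_natDegree_pos f.denom_ne_zero hσ))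

lemma ordAt_ratComp {f : RatFunc k} (hf : f ≠ 0) {σ : k[X]} (hσ : 0 < σ.natDegree) (a : k) :
    ordAt (ratComp f σ) a = ramificationIndexAt σ a * ordAt f (σ.eval a) := by
  have hnum := RatFunc.num_ne_zero hf
  rw [ratComp, ordAt_div_algebraMap (comp_ne_zero_of_natDegree_pos hnum hσ)
      (comp_ne_zero_of_natDegree_pos f.denom_ne_zero hσ),
    rootMultiplicity_comp hnum hσ, rootMultiplicity_comp f.denom_ne_zero hσ, ordAt]
  push_cast
  ring

lemma ordAt_ne_zero_iff {f : RatFunc k} (hf : f ≠ 0) (a : k) :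
    ordAt f a ≠ 0 ↔ (f.num * f.denom).IsRoot a := by
  have hcop := aeval_ne_zero_of_isCoprime f.isCoprime_num_denom a
  simp only [coe_aeval_eq_eval] at hcop
  rw [ordAt, IsRoot.def, eval_mul, mul_eq_zero, ← IsRoot.def, ← IsRoot.def,
    ← rootMultiplicity_pos (RatFunc.num_ne_zero hf), ← rootMultiplicity_pos f.denom_ne_zero]
  rcases hcop with h | h <;> rw [rootMultiplicity_eq_zero h] <;> omega

variable [DecidableEq k]

noncomputable def ordSupport (f : RatFunc k) : Finset k := (f.num * f.denom).roots.toFinset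

lemma mem_ordSupport {f : RatFunc k} (hf : f ≠ 0) {a : k} :
    a ∈ ordSupport f ↔ ordAt f a ≠ 0 := by
  rw [ordSupport, Multiset.mem_toFinset,
    mem_roots (mul_ne_zero (RatFunc.num_ne_zero hf) f.denom_ne_zero), ordAt_ne_zero_iff hf]

lemma coe_ordSupport {f : RatFunc k} (hf : f ≠ 0) :
    ↑(ordSupport f) = {a : k | ordAt f a ≠ 0} :=
  Set.ext fun _ => mem_ordSupport hf

end OrdAt

namespace SemiInvariant

variable {k : Type*} [Field k] {σ₁ σ₂ : k[X]} {f : RatFunc k} {ν : ℤ}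

lemma ordAt_eq (hf : SemiInvariant σ₁ σ₂ f ν) (h₁ : 0 < σ₁.natDegree) (h₂ : 0 < σ₂.natDegree)
    (hD₁ : derivative σ₁ ≠ 0) (hD₂ : derivative σ₂ ≠ 0) (a : k) :
    ramificationIndexAt σ₁ a * ordAt f (σ₁.eval a) + ν * (derivative σ₁).rootMultiplicity a
      = ramificationIndexAt σ₂ a * ordAt f (σ₂.eval a)
        + ν * (derivative σ₂).rootMultiplicity a := by
  obtain ⟨hf0, lam, hlam, heq⟩ := hf
  have hD₁' := RatFunc.algebraMap_ne_zero hD₁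
  have hD₂' := RatFunc.algebraMap_ne_zero hD₂
  have h := congrArg (ordAt · a) heq
  rwa [ordAt_mul (ratComp_ne_zero hf0 h₁) (zpow_ne_zero _ hD₁'),
    ordAt_mul ((_root_.map_ne_zero RatFunc.C).mpr hlam)
      (mul_ne_zero (ratComp_ne_zero hf0 h₂) (zpow_ne_zero _ hD₂')),
    ordAt_mul (ratComp_ne_zero hf0 h₂) (zpow_ne_zero _ hD₂'), ordAt_C, zero_add,
    ordAt_ratComp hf0 h₁, ordAt_ratComp hf0 h₂, ordAt_zpow hD₁', ordAt_zpow hD₂',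
    ordAt_algebraMap hD₁, ordAt_algebraMap hD₂] at h

lemma ordAt_eval_eq_of_not_isRoot (hf : SemiInvariant σ₁ σ₂ f ν) (h₁ : 0 < σ₁.natDegree)
    (h₂ : 0 < σ₂.natDegree) {a : k} (ha₁ : ¬ (derivative σ₁).IsRoot a)
    (ha₂ : ¬ (derivative σ₂).IsRoot a) : ordAt f (σ₁.eval a) = ordAt f (σ₂.eval a) := by
  have h := hf.ordAt_eq h₁ h₂ (fun h => ha₁ (by simp [h])) (fun h => ha₂ (by simp [h])) a
  rwa [(ramificationIndexAt_eq_one_iff h₁ a).mpr ha₁,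
    (ramificationIndexAt_eq_one_iff h₂ a).mpr ha₂, rootMultiplicity_eq_zero ha₁,
    rootMultiplicity_eq_zero ha₂, Nat.cast_one, one_mul, one_mul,
    Nat.cast_zero, mul_zero, add_zero, add_zero] at h

lemma filter_biUnion_fiber_subset [DecidableEq k] (hf : SemiInvariant σ₁ σ₂ f ν)
    (h₁ : 0 < σ₁.natDegree) (h₂ : 0 < σ₂.natDegree) (hD₂ : derivative σ₂ ≠ 0) :
    {a ∈ (ordSupport f).biUnion (fiber σ₁) | ramificationIndexAt σ₁ a = 1}
      ⊆ (ordSupport f).biUnion (fiber σ₂) ∪ (derivative σ₂).roots.toFinset := by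
  intro a ha
  obtain ⟨ha, he⟩ := Finset.mem_filter.mp ha
  obtain ⟨s, hs, ha⟩ := Finset.mem_biUnion.mp ha
  rw [mem_fiber h₁] at ha
  subst ha
  rw [Finset.mem_union, Finset.mem_biUnion, Multiset.mem_toFinset, mem_roots hD₂]
  by_cases ha₂ : (derivative σ₂).IsRoot a
  · exact Or.inr ha₂
  · refine Or.inl ⟨σ₂.eval a, ?_, (mem_fiber h₂).mpr rfl⟩
    rw [mem_ordSupport hf.1, ← hf.ordAt_eval_eq_of_not_isRoot h₁ h₂
      ((ramificationIndexAt_eq_one_iff h₁ a).mp he) ha₂]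
    exact (mem_ordSupport hf.1).mp hs

end SemiInvariant

theorem conductor_bound_semiInvariant_general
    {k : Type*} [Field k] [IsAlgClosed k] (σ₁ σ₂ : k[X])
    (h₁ : 0 < σ₁.natDegree) (h₂ : 0 < σ₂.natDegree)
    (ht₁ : TamelyRamified σ₁) (ht₂ : TamelyRamified σ₂)
    (ν : ℤ) (f : RatFunc k) (hf : SemiInvariant σ₁ σ₂ f ν) :
    ({a : k | ordAt f a ≠ 0}.ncard : ℤ) * ((σ₁.natDegree : ℤ) - (σ₂.natDegree : ℤ))
      ≤ 2 * ((σ₁.natDegree : ℤ) - (σ₂.natDegree : ℤ)) + 3 * ((σ₂.natDegree : ℤ) - 1) := by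
  classical
  rw [← coe_ordSupport hf.1, Set.ncard_coe_finset]
  set S := ordSupport f
  have hunramified := card_mul_natDegree_le h₁ ht₁ S
  have hcover := Finset.card_le_card
    (hf.filter_biUnion_fiber_subset h₁ h₂ (derivative_ne_zero_of_not_ringChar_dvd ht₂.1))
  have hunion := Finset.card_union_le (S.biUnion (fiber σ₂)) (derivative σ₂).roots.toFinset
  have hfibers := card_biUnion_fiber_le σ₂ S
  have hcritical : (derivative σ₂).roots.toFinset.card ≤ σ₂.natDegree - 1 :=
    (Multiset.toFinset_card_le _).trans <| (card_roots' _).trans (natDegree_derivative_le σ₂)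
  zify [h₁, h₂] at hunramified hcover hunion hfibers hcritical
  linarith

/-- the conductor `C` of a semi-invariant form of weight `ν ≥ 1` satisfies
`C·(d₁ − d₂) ≤ 2(d₁ − d₂) + 3(d₂ − 1)`. -/
theorem conductor_bound_semiInvariant
    {k : Type*} [Field k] [IsAlgClosed k] (σ₁ σ₂ : k[X])
    (h₁ : 0 < σ₁.natDegree) (h₂ : 0 < σ₂.natDegree)
    (ht₁ : TamelyRamified σ₁) (ht₂ : TamelyRamified σ₂)
    (hdeg : σ₂.natDegree < σ₁.natDegree)
    (ν : ℤ) (hν : 1 ≤ ν) (f : RatFunc k) (hf : SemiInvariant σ₁ σ₂ f ν) :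
    ({a : k | ordAt f a ≠ 0}.ncard : ℤ) * ((σ₁.natDegree : ℤ) - (σ₂.natDegree : ℤ))
      ≤ 2 * ((σ₁.natDegree : ℤ) - (σ₂.natDegree : ℤ)) + 3 * ((σ₂.natDegree : ℤ) - 1) :=
  conductor_bound_semiInvariant_general σ₁ σ₂ h₁ h₂ ht₁ ht₂ ν f hf
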